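/- If w is an aperiodic infinite word, then limsup_{n→∞} inrc_w(n)/n ≥ 1/(1+φ²) > 0; in particular inrc_w(n) grows at least linearly along a subsequence. -/

import Mathlib

/-!
If `inrc x n < n / 2` for all large `n`, then for each such `n` two of the first
`inrc x n + 1` length-`n` factors coincide, so `x` has a small period `p` on a window of length
`n + p` starting near the origin. Consecutive windows overlap on a stretch longer than the sum of their periods,
which forces the first period onto the next window; gluing the windows, the first period
propagates to the whole tail of `x`, contradicting aperiodicity. Hence `inrc x n / n ≥ 1 / 2`
infinitely often, and `1 / (1 + φ²) < 1 / 2`.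
-/

open Filter
open scoped ENNReal

/-- The set of `m` such that the first `m` length-`n` factors of `x`
are pairwise distinct. -/
def inrcSet {α : Type*} (x : ℕ → α) (n : ℕ) : Set ℕ :=
  {m | ∀ i < m, ∀ j < m, (∀ d < n, x (i + d) = x (j + d)) → i = j}

/-- The initial non-repetitive complexity. -/
noncomputable def inrc {α : Type*} (x : ℕ → α) (n : ℕ) : ℕ := sSup (inrcSet x n)

theorem Nat.exists_modEq_mem_Ico {p : ℕ} (hp : 0 < p) (b t : ℕ) :
    ∃ s, b ≤ s ∧ s < b + p ∧ s ≡ t [MOD p] := by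
  refine ⟨b + (t + p * b - b) % p, by omega, by have := Nat.mod_lt (t + p * b - b) hp; omega, ?_⟩
  have hb : b ≤ p * b := Nat.le_mul_of_pos_left b hp
  unfold Nat.ModEq
  rw [Nat.add_mod_mod, show b + (t + p * b - b) = t + p * b by omega, Nat.add_mul_mod_self_left]

def PeriodicOn {α : Type*} (x : ℕ → α) (p a c : ℕ) : Prop :=
  ∀ t, a ≤ t → t + p < c → x (t + p) = x t

namespace PeriodicOn

variable {α : Type*} {x : ℕ → α} {p q a b c e : ℕ}

theorem mono (H : PeriodicOn x p a c) (hb : a ≤ b) (he : e ≤ c) : PeriodicOn x p b e :=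
  fun t hbt hte => H t (hb.trans hbt) (hte.trans_le he)

theorem apply_add_mul (H : PeriodicOn x p a c) {s : ℕ} (hs : a ≤ s) :
    ∀ k, s + p * k < c → x (s + p * k) = x s
  | 0, _ => rfl
  | k + 1, hk => by
    rw [Nat.mul_succ, ← Nat.add_assoc] at hk ⊢
    rw [H _ (by omega) hk]
    exact H.apply_add_mul hs k (by omega)

theorem apply_eq_of_modEq (H : PeriodicOn x p a c) {u v : ℕ} (hu : a ≤ u) (hv : a ≤ v)
    (hu' : u < c) (hv' : v < c) (huv : u ≡ v [MOD p]) : x u = x v := by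
  wlog hle : u ≤ v generalizing u v
  · exact (this hv hu hv' hu' huv.symm (by omega)).symm
  obtain ⟨k, hk⟩ := (Nat.modEq_iff_dvd' hle).mp huv
  have hv_eq : v = u + p * k := by omega
  subst hv_eq
  exact (H.apply_add_mul hu k hv').symm

/-- Every `t` in `[a, c)` is congruent mod `p` to some `s` in `[b, b + p)`, where `q` is a period
of `x` at `s`; transport `x (s + q) = x s` back to `t` along the period `p`. -/
theorem of_subinterval (H : PeriodicOn x p a c) (H' : PeriodicOn x q b e) (hp : 0 < p)
    (hab : a ≤ b) (hec : e ≤ c) (hlen : b + p + q ≤ e) : PeriodicOn x q a c := by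
  intro t hat htc
  obtain ⟨s, hbs, hsb, hst⟩ := Nat.exists_modEq_mem_Ico hp b t
  calc x (t + q) = x (s + q) :=
        H.apply_eq_of_modEq (by omega) (by omega) htc (by omega) (hst.add_right q).symm
    _ = x s := H' s hbs (by omega)
    _ = x t := H.apply_eq_of_modEq (by omega) hat (by omega) (by omega) hst

theorem union (H : PeriodicOn x p a c) (H' : PeriodicOn x p b e) (hov : max a b + p ≤ min c e) :
    PeriodicOn x p (min a b) (max c e) := by
  intro t hat htc
  by_cases htb : b ≤ t ∧ t + p < e
  · exact H' t htb.1 htb.2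
  · exact H t (by omega) (by omega)

theorem union_of_overlap (H : PeriodicOn x q a c) (H' : PeriodicOn x p b e) (hp : 0 < p)
    (hov : max a b + p + q ≤ min c e) : PeriodicOn x q (min a b) (max c e) :=
  H.union (H'.of_subinterval (H.mono (le_max_left a b) (min_le_left c e)) hp
    (le_max_right a b) (min_le_right c e) hov) (by omega)

end PeriodicOn

theorem eventually_periodic_of_forall_periodicOn {α : Type*} {x : ℕ → α} {N : ℕ}
    (hN : ∀ n ≥ N, ∃ i p, 0 < p ∧ 2 * (i + p) < n ∧ PeriodicOn x p i (i + p + n)) :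
    ∃ p > 0, ∃ M, ∀ t ≥ M, x (t + p) = x t := by
  obtain ⟨i₀, p₀, hp₀, hsmall₀, H₀⟩ := hN N le_rfl
  have grow : ∀ k, ∃ a c, a ≤ i₀ ∧ N + k ≤ c ∧ PeriodicOn x p₀ a c := by
    intro k
    induction k with
    | zero => exact ⟨i₀, i₀ + p₀ + N, le_rfl, by omega, H₀⟩
    | succ k ih =>
      obtain ⟨a, c, ha, hc, H⟩ := ih
      obtain ⟨i, p, hp, hsmall, H'⟩ := hN (N + k + 1) (by omega)
      exact ⟨_, _, by omega, by omega, H.union_of_overlap H' hp (by omega)⟩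
  refine ⟨p₀, hp₀, i₀, fun t ht => ?_⟩
  obtain ⟨a, c, ha, hc, H⟩ := grow (t + p₀ + 1)
  exact H t (by omega) (by omega)

theorem periodicOn_of_factor_eq {α : Type*} {x : ℕ → α} {n i j : ℕ} (hij : i ≤ j)
    (hfac : ∀ d < n, x (i + d) = x (j + d)) : PeriodicOn x (j - i) i (j + n) := by
  intro t hit htn
  calc x (t + (j - i)) = x (j + (t - i)) := by congr 1; omega
    _ = x (i + (t - i)) := (hfac (t - i) (by omega)).symm
    _ = x t := by congr 1; omega

theorem bddAbove_inrcSet {α : Type*} [Finite α] (x : ℕ → α) (n : ℕ) :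
    BddAbove (inrcSet x n) := by
  refine ⟨Nat.card (Fin n → α), fun m hm => ?_⟩
  have hinj : Function.Injective fun (i : Fin m) (d : Fin n) => x (i + d) :=
    fun i j hij => Fin.ext (hm i i.isLt j j.isLt fun d hd => congrFun hij ⟨d, hd⟩)
  simpa using Nat.card_le_card_of_injective _ hinj

theorem exists_periodicOn_of_inrc {α : Type*} [Finite α] (x : ℕ → α) (n : ℕ) :
    ∃ i p, 0 < p ∧ i + p ≤ inrc x n ∧ PeriodicOn x p i (i + p + n) := by
  have hnot : inrc x n + 1 ∉ inrcSet x n := fun hmem =>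
    absurd (le_csSup (bddAbove_inrcSet x n) hmem) (by unfold inrc; omega)
  simp only [inrcSet, Set.mem_ofPred_eq, not_forall] at hnot
  obtain ⟨i, hi, j, hj, hfac, hij⟩ := hnot
  rcases Nat.lt_or_gt_of_ne hij with hlt | hlt
  · exact ⟨i, j - i, by omega, by omega, by
      simpa [Nat.add_sub_cancel' hlt.le] using periodicOn_of_factor_eq hlt.le hfac⟩
  · exact ⟨j, i - j, by omega, by omega, by
      simpa [Nat.add_sub_cancel' hlt.le] using
        periodicOn_of_factor_eq hlt.le fun d hd => (hfac d hd).symm⟩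

theorem frequently_le_two_mul_inrc {α : Type*} [Finite α] {x : ℕ → α}
    (h : ¬ ∃ p > 0, ∃ N, ∀ i ≥ N, x (i + p) = x i) : ∃ᶠ n in atTop, n ≤ 2 * inrc x n := by
  rw [frequently_atTop]
  by_contra! hsmall
  obtain ⟨N, hN⟩ := hsmall
  refine h (eventually_periodic_of_forall_periodicOn (N := N) fun n hn => ?_)
  obtain ⟨i, p, hp, hle, H⟩ := exists_periodicOn_of_inrc x n
  exact ⟨i, p, hp, by have := hN n hn; omega, H⟩

theorem inv_two_le_limsup_inrc_div {α : Type*} [Finite α] {x : ℕ → α}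
    (h : ¬ ∃ p > 0, ∃ N, ∀ i ≥ N, x (i + p) = x i) :
    2⁻¹ ≤ limsup (fun n => (inrc x n : ℝ≥0∞) / (n : ℝ≥0∞)) atTop := by
  refine le_limsup_of_frequently_le' <|
    ((frequently_le_two_mul_inrc h).and_eventually (eventually_gt_atTop 0)).mono ?_
  rintro n ⟨hle, hpos⟩
  rw [ENNReal.le_div_iff_mul_le (.inl (by simpa using hpos.ne')) (by simp),
    ENNReal.inv_mul_le_iff (by simp) (by simp)]
  exact_mod_cast hle

theorem inrc_limsup_of_aperiodic {α : Type*} [Fintype α] (x : ℕ → α)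
    (h : ¬ ∃ p > 0, ∃ N, ∀ i ≥ N, x (i + p) = x i) :
    ENNReal.ofReal (1 / (1 + ((1 + Real.sqrt 5) / 2) ^ 2))
      ≤ limsup (fun n => (inrc x n : ℝ≥0∞) / (n : ℝ≥0∞)) atTop ∧
    (0 : ℝ) < 1 / (1 + ((1 + Real.sqrt 5) / 2) ^ 2) := by
  have hφ : 1 ≤ (1 + Real.sqrt 5) / 2 := Real.one_lt_goldenRatio.le
  refine ⟨le_trans ?_ (inv_two_le_limsup_inrc_div h), by positivity⟩
  rw [← ENNReal.ofReal_ofNat 2, ← ENNReal.ofReal_inv_of_pos two_pos]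
  refine ENNReal.ofReal_le_ofReal ?_
  rw [one_div]
  exact inv_anti₀ two_pos (by nlinarith)
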